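/- For a > 0 and any offset σ ∈ ℝ and any step h with 0 < h < π/a, the shifted trapezoidal sum of P_Y(y) = (a/π) sinc²(a y) equals its integral: h · Σ_{m∈ℤ} (a/π) sinc²(a(m+σ)h) = 1. -/

import Mathlib

open MeasureTheory

open Filter Asymptotics Complex
open scoped FourierTransform Real

noncomputable def sinc (x : ℝ) : ℝ := if x = 0 then 1 else Real.sin x / x

lemma sinc_zero : sinc 0 = 1 := if_pos rfl

lemma sinc_of_ne (x : ℝ) (hx : x ≠ 0) : sinc x = Real.sin x / x := if_neg hx

lemma sinc_neg (x : ℝ) : sinc (-x) = sinc x := by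
  rcases eq_or_ne x 0 with rfl | hx
  · simp
  · rw [sinc_of_ne _ (neg_ne_zero.mpr hx), sinc_of_ne _ hx, Real.sin_neg, neg_div_neg_eq]

lemma abs_sinc_le_one (x : ℝ) : |sinc x| ≤ 1 := by
  rcases eq_or_ne x 0 with rfl | hx
  · simp [sinc_zero]
  · rw [sinc_of_ne _ hx, abs_div]
    rw [div_le_one (abs_pos.mpr hx)]
    exact Real.abs_sin_le_abs

lemma sinc_sq_le_one (x : ℝ) : sinc x ^ 2 ≤ 1 := by
  have := abs_sinc_le_one x
  nlinarith [abs_nonneg (sinc x), _root_.sq_abs (sinc x)]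

lemma sinc_sq_le (x : ℝ) (hx : x ≠ 0) : sinc x ^ 2 ≤ (x ^ 2)⁻¹ := by
  rw [sinc_of_ne _ hx, div_pow]
  rw [div_le_iff₀ (by positivity)]
  have h1 : Real.sin x ^ 2 ≤ 1 := by nlinarith [Real.sin_sq_add_cos_sq x, sq_nonneg (Real.cos x)]
  calc Real.sin x ^ 2 ≤ 1 := h1
    _ = (x ^ 2)⁻¹ * x ^ 2 := by field_simp

lemma continuous_sinc : Continuous sinc := by
  rw [continuous_iff_continuousAt]
  intro x
  rcases eq_or_ne x 0 with rfl | hx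
  · have h1 : Filter.Tendsto (fun y : ℝ => Real.sin y / y) (nhdsWithin 0 {0}ᶜ) (nhds 1) := by
      have := (Real.hasDerivAt_sin 0)
      rw [hasDerivAt_iff_tendsto_slope] at this
      have h := this
      rw [Real.cos_zero] at h
      refine h.congr' ?_
      filter_upwards [self_mem_nhdsWithin] with y hy
      simp [slope_def_field, div_eq_inv_mul]
    have h2 : Filter.Tendsto sinc (nhdsWithin 0 {0}ᶜ) (nhds 1) := by
      refine h1.congr' ?_
      filter_upwards [self_mem_nhdsWithin] with y hy
      exact (sinc_of_ne y hy).symm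
    have h3 : Filter.Tendsto sinc (pure (0:ℝ)) (nhds 1) := by
      simpa [sinc_zero] using tendsto_pure_nhds sinc (0:ℝ) -- ?
    rw [ContinuousAt, sinc_zero]
    rw [← nhdsNE_sup_pure (0:ℝ)]
    exact h2.sup h3
  · have : ContinuousAt (fun y : ℝ => Real.sin y / y) x :=
      (Real.continuous_sin.continuousAt).div continuousAt_id hx
    refine this.congr ?_
    filter_upwards [isOpen_ne.mem_nhds hx] with y hy
    exact (sinc_of_ne y hy).symm
noncomputable def tri (x : ℝ) : ℂ := ((max 0 (1 - |x|) : ℝ) : ℂ)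

lemma continuous_tri : Continuous tri :=
  Complex.continuous_ofReal.comp (continuous_const.max (continuous_const.sub continuous_abs))

lemma tri_eq_zero {x : ℝ} (hx : 1 ≤ |x|) : tri x = 0 := by
  simp [tri, max_eq_left, sub_nonpos.mpr hx]

lemma hasCompactSupport_tri : HasCompactSupport tri := by
  apply HasCompactSupport.intro (isCompact_Icc (a := (-1:ℝ)) (b := 1))
  intro x hx
  apply tri_eq_zero
  simp only [Set.mem_Icc, not_and_or, not_le] at hx
  rw [le_abs]
  rcases hx with h | h
  · right; linarith
  · left; linarith

lemma integrable_tri : Integrable tri :=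
  continuous_tri.integrable_of_hasCompactSupport hasCompactSupport_tri

lemma integral_affine_mul_exp (α β μ : ℂ) (hμ : μ ≠ 0) (a b : ℝ) :
    ∫ v in a..b, (α + β * v) * Complex.exp (μ * v)
      = ((α + β*b)/μ - β/μ^2) * Complex.exp (μ*b)
        - ((α + β*a)/μ - β/μ^2) * Complex.exp (μ*a) := by
  have h1 : ∀ v : ℝ, HasDerivAt (fun v:ℝ => (v:ℂ)) 1 v := by
    intro v
    simpa using (hasDerivAt_id v).ofReal_comp
  refine intervalIntegral.integral_eq_sub_of_hasDerivAt
      (f := fun v : ℝ => ((α + β*(v:ℂ))/μ - β/μ^2) * Complex.exp (μ*v))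
      (f' := fun v : ℝ => (α + β*(v:ℂ)) * Complex.exp (μ*v)) (fun v _ => ?_) ?_
  · have h2 : HasDerivAt (fun v:ℝ => Complex.exp (μ*v)) (μ * Complex.exp (μ*v)) v := by
      simpa [mul_comm] using ((h1 v).const_mul μ).cexp
    have h3 : HasDerivAt (fun v:ℝ => (α + β*(v:ℂ))/μ - β/μ^2) (β/μ) v := by
      simpa using ((((h1 v).const_mul β).const_add α).div_const μ).sub_const (β/μ^2)
    have := h3.mul h2
    refine this.congr_deriv ?_
    field_simp
    ring
  · apply Continuous.intervalIntegrable
    exact (continuous_const.add (continuous_const.mul Complex.continuous_ofReal)).mul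
      (Complex.continuous_exp.comp (continuous_const.mul Complex.continuous_ofReal))

lemma ftri (ξ : ℝ) : 𝓕 tri ξ = ((sinc (Real.pi * ξ))^2 : ℝ) := by
  rw [Real.fourier_real_eq_integral_exp_smul]
  have hsupp : ∀ v : ℝ, v ∉ Set.Ioc (-1:ℝ) 1 →
      Complex.exp (↑(-2 * Real.pi * v * ξ) * I) • tri v = 0 := by
    intro v hv
    have hz : tri v = 0 := by
      apply tri_eq_zero
      simp only [Set.mem_Ioc, not_and_or, not_lt, not_le] at hv
      rw [le_abs]
      rcases hv with h | h
      · right; linarith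
      · left; linarith
    simp [hz]
  rw [← setIntegral_eq_integral_of_forall_compl_eq_zero hsupp,
    ← intervalIntegral.integral_of_le (by norm_num : (-1:ℝ) ≤ 1)]
  have hcont : Continuous fun v : ℝ => Complex.exp (↑(-2 * Real.pi * v * ξ) * I) • tri v := by
    refine Continuous.smul (f := fun v : ℝ => Complex.exp (↑(-2 * Real.pi * v * ξ) * I)) ?_ continuous_tri
    exact Complex.continuous_exp.comp
      ((Complex.continuous_ofReal.comp (by continuity)).mul continuous_const)
  rw [← intervalIntegral.integral_add_adjacent_intervals (b := (0:ℝ))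
    (hcont.intervalIntegrable _ _) (hcont.intervalIntegrable _ _)]
  set μ : ℂ := ((-2 * (Real.pi * ξ) : ℝ) : ℂ) * I with hμdef
  have h1 : ∫ v in (-1:ℝ)..0, Complex.exp (↑(-2 * Real.pi * v * ξ) * I) • tri v
      = ∫ v in (-1:ℝ)..0, ((1:ℂ) + 1 * v) * Complex.exp (μ * v) := by
    apply intervalIntegral.integral_congr
    intro v hv
    rw [Set.uIcc_of_le (by norm_num : (-1:ℝ) ≤ 0), Set.mem_Icc] at hv
    have habs : |v| = -v := abs_of_nonpos hv.2
    have htri : tri v = ((1 + v : ℝ) : ℂ) := by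
      rw [tri]
      congr 1
      rw [habs, max_eq_right (by linarith)]
      ring
    show Complex.exp (↑(-2 * Real.pi * v * ξ) * I) • tri v = ((1:ℂ) + 1 * v) * Complex.exp (μ * v)
    rw [htri, smul_eq_mul, hμdef]
    push_cast
    ring_nf
  have h2 : ∫ v in (0:ℝ)..1, Complex.exp (↑(-2 * Real.pi * v * ξ) * I) • tri v
      = ∫ v in (0:ℝ)..1, ((1:ℂ) + (-1) * v) * Complex.exp (μ * v) := by
    apply intervalIntegral.integral_congr
    intro v hv
    rw [Set.uIcc_of_le (by norm_num : (0:ℝ) ≤ 1), Set.mem_Icc] at hv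
    have habs : |v| = v := abs_of_nonneg hv.1
    have htri : tri v = ((1 - v : ℝ) : ℂ) := by
      rw [tri]
      congr 1
      rw [habs, max_eq_right (by linarith)]
    show Complex.exp (↑(-2 * Real.pi * v * ξ) * I) • tri v = ((1:ℂ) + (-1) * v) * Complex.exp (μ * v)
    rw [htri, smul_eq_mul, hμdef]
    push_cast
    ring_nf
  rw [h1, h2]
  rcases eq_or_ne ξ 0 with rfl | hξ
  · have hμ0 : μ = 0 := by simp [hμdef]
    simp only [hμ0, zero_mul, Complex.exp_zero, mul_one]
    rw [intervalIntegral.integral_congr (g := fun v : ℝ => ((1 + v : ℝ) : ℂ))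
        (by intro v _; push_cast; ring),
      intervalIntegral.integral_congr (a := (0:ℝ)) (b := (1:ℝ))
        (g := fun v : ℝ => ((1 - v : ℝ) : ℂ)) (by intro v _; push_cast; ring),
      intervalIntegral.integral_ofReal, intervalIntegral.integral_ofReal]
    have e1 : ∫ v in (-1:ℝ)..0, (1 + v) = 1/2 := by
      rw [intervalIntegral.integral_add intervalIntegrable_const intervalIntegral.intervalIntegrable_id,
        integral_id]
      norm_num
    have e2 : ∫ v in (0:ℝ)..1, (1 - v) = 1/2 := by
      rw [intervalIntegral.integral_sub intervalIntegrable_const intervalIntegral.intervalIntegrable_id,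
        integral_id]
      norm_num
    rw [e1, e2]
    norm_num [sinc_zero]
  · have ht : Real.pi * ξ ≠ 0 := mul_ne_zero Real.pi_ne_zero hξ
    have hμ : μ ≠ 0 := by
      rw [hμdef]
      apply mul_ne_zero _ Complex.I_ne_zero
      rw [ne_eq, Complex.ofReal_eq_zero]
      intro hc
      exact ht (by linarith)
    rw [integral_affine_mul_exp _ _ _ hμ, integral_affine_mul_exp _ _ _ hμ]
    simp only [Complex.ofReal_zero, Complex.ofReal_one, Complex.ofReal_neg, mul_zero, mul_one,
      mul_neg, mul_neg_one, Complex.exp_zero]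
    have hμsq : μ^2 = -(((2 * (Real.pi * ξ))^2 : ℝ) : ℂ) := by
      rw [hμdef]
      push_cast
      rw [mul_pow, Complex.I_sq]
      ring
    have hexp2 : Complex.exp (-μ) + Complex.exp μ
        = 2 * Complex.cos (((2 * (Real.pi * ξ) : ℝ)) : ℂ) := by
      have hz : μ = -(((2 * (Real.pi * ξ) : ℝ) : ℂ) * I) := by
        rw [hμdef]; push_cast; ring
      rw [hz, neg_neg, Complex.exp_mul_I, show -(((2 * (Real.pi * ξ) : ℝ) : ℂ) * I)
          = (-((2 * (Real.pi * ξ) : ℝ) : ℂ)) * I from by ring, Complex.exp_mul_I,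
        Complex.cos_neg, Complex.sin_neg]
      ring
    have hreal : (2 * Real.cos (2 * (Real.pi * ξ)) - 2) / (-((2 * (Real.pi * ξ))^2))
        = (sinc (Real.pi * ξ))^2 := by
      rw [sinc_of_ne _ ht, Real.cos_two_mul, div_pow]
      field_simp
      nlinarith [Real.sin_sq_add_cos_sq (Real.pi * ξ)]
    rw [← hreal]
    rw [show ((((2 * Real.cos (2 * (Real.pi * ξ)) - 2) / (-((2 * (Real.pi * ξ))^2)) : ℝ)) : ℂ)
        = (2 * Complex.cos (((2 * (Real.pi * ξ) : ℝ)) : ℂ) - 2) / μ^2 from by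
      rw [hμsq]; push_cast; ring]
    rw [← hexp2]
    have hr : ((-2 * (Real.pi * ξ) : ℝ) : ℂ) ≠ 0 := by
      rw [ne_eq, Complex.ofReal_eq_zero]
      intro hc
      exact ht (by linarith)
    rw [hμdef]
    field_simp [hr, Complex.I_ne_zero]
    ring

lemma tri_neg (x : ℝ) : tri (-x) = tri x := by simp [tri]

lemma integrable_sinc_sq_real : Integrable (fun ξ : ℝ => (sinc (Real.pi * ξ))^2) := by
  apply Integrable.mono' (integrable_inv_one_add_sq.const_mul 2)
  · exact (((continuous_sinc.comp (continuous_const.mul continuous_id)).pow 2)).aestronglyMeasurable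
  · refine Filter.Eventually.of_forall fun ξ => ?_
    rw [Real.norm_eq_abs, _root_.abs_of_nonneg (sq_nonneg _)]
    have h3 : (0:ℝ) < 1 + ξ^2 := by positivity
    rcases le_or_gt (ξ^2) 1 with hle | hgt
    · have h1 : (sinc (Real.pi * ξ))^2 ≤ 1 := sinc_sq_le_one _
      have h5 : (2:ℝ)⁻¹ ≤ (1+ξ^2)⁻¹ := by
        apply inv_anti₀ h3
        linarith
      linarith
    · have hξ : ξ ≠ 0 := by
        intro hc
        rw [hc] at hgt
        norm_num at hgt
      have ht : Real.pi * ξ ≠ 0 := mul_ne_zero Real.pi_ne_zero hξ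
      have h1 : (sinc (Real.pi * ξ))^2 ≤ ((Real.pi * ξ)^2)⁻¹ := sinc_sq_le _ ht
      have h4 : (1:ℝ)/((Real.pi*ξ)^2) ≤ 2/(1+ξ^2) := by
        rw [div_le_div_iff₀ (by positivity) h3]
        have hpi2 : (9:ℝ) ≤ Real.pi^2 := by nlinarith [Real.pi_gt_three]
        nlinarith [hpi2, hgt]
      simp only [one_div, div_eq_mul_inv] at h4
      linarith

lemma ftri_eq : 𝓕 tri = fun ξ : ℝ => (((sinc (Real.pi * ξ))^2 : ℝ) : ℂ) := funext ftri

lemma integrable_ftri : Integrable (𝓕 tri) := by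
  rw [ftri_eq]
  exact integrable_sinc_sq_real.ofReal

lemma fourier_sinc_sq (v : ℝ) :
    𝓕 (fun ξ : ℝ => (((sinc (Real.pi * ξ))^2 : ℝ) : ℂ)) v = tri v := by
  have hinv : 𝓕⁻ (𝓕 tri) = tri :=
    continuous_tri.fourierInv_fourier_eq integrable_tri integrable_ftri
  have h2 : 𝓕 (𝓕 tri) v = tri (-v) := by
    have := Real.fourierInv_eq_fourier_neg (𝓕 tri) (-v)
    rw [neg_neg] at this
    rw [← this, hinv]
  rw [← ftri_eq, h2, tri_neg]

lemma fourier_comp_mul (g : ℝ → ℂ) (c : ℝ) (hc : c ≠ 0) (w : ℝ) :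
    𝓕 (fun y => g (c * y)) w = |c|⁻¹ • 𝓕 g (w / c) := by
  rw [Real.fourier_real_eq, Real.fourier_real_eq]
  have key : ∀ v : ℝ, 𝐞 (-(v * w)) • g (c * v)
      = (fun u : ℝ => 𝐞 (-(u * (w / c))) • g u) (c * v) := by
    intro v
    simp only
    have harg : -(c * v * (w / c)) = -(v * w) := by
      field_simp
    rw [harg]
  simp_rw [key]
  rw [MeasureTheory.Measure.integral_comp_mul_left
    (fun u : ℝ => 𝐞 (-(u * (w / c))) • g u) c, abs_inv]

lemma fourier_sinc_sq_scaled (b : ℝ) (hb : 0 < b) (w : ℝ) :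
    𝓕 (fun y : ℝ => (((sinc (b * y))^2 : ℝ) : ℂ)) w
      = (Real.pi / b) • tri (Real.pi * w / b) := by
  have hπ : (0:ℝ) < Real.pi := Real.pi_pos
  have hc : b / Real.pi ≠ 0 := by positivity
  have hfun : (fun y : ℝ => (((sinc (b * y))^2 : ℝ) : ℂ))
      = fun y : ℝ => (fun ξ : ℝ => (((sinc (Real.pi * ξ))^2 : ℝ) : ℂ)) ((b / Real.pi) * y) := by
    funext y
    simp only
    congr 3
    field_simp
  rw [hfun, fourier_comp_mul (fun ξ : ℝ => (((sinc (Real.pi * ξ))^2 : ℝ) : ℂ)) _ hc, fourier_sinc_sq]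
  have h1 : |b / Real.pi|⁻¹ = Real.pi / b := by
    rw [abs_of_pos (by positivity), inv_div]
  have h2 : w / (b / Real.pi) = Real.pi * w / b := by
    field_simp
  rw [h1, h2]

lemma sinc_sq_sum (b : ℝ) (hb : 0 < b) (hbπ : b < Real.pi) (σ : ℝ) :
    ∑' m : ℤ, sinc (b * (σ + (m:ℝ)))^2 = Real.pi / b := by
  have hπ : (0:ℝ) < Real.pi := Real.pi_pos
  set f : ℝ → ℂ := fun y => ((sinc (b * y)^2 : ℝ) : ℂ) with hfdef
  have hcont : Continuous f :=
    Complex.continuous_ofReal.comp ((continuous_sinc.comp (continuous_const.mul continuous_id)).pow 2)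
  have hFf : ∀ w : ℝ, 𝓕 f w = (Real.pi / b) • tri (Real.pi * w / b) :=
    fourier_sinc_sq_scaled b hb
  have hzero : ∀ n : ℤ, n ≠ 0 → 𝓕 f (n : ℝ) = 0 := by
    intro n hn
    rw [hFf]
    have h1 : (1:ℝ) ≤ |(n:ℝ)| := by
      rw [← Int.cast_abs]
      exact_mod_cast Int.one_le_abs hn
    have h2 : (1:ℝ) ≤ |Real.pi * (n:ℝ) / b| := by
      rw [abs_div, abs_mul, abs_of_pos hπ, abs_of_pos hb, le_div_iff₀ hb]
      nlinarith
    rw [tri_eq_zero h2, smul_zero]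
  have hdecay : f =O[cocompact ℝ] (fun x : ℝ => |x| ^ (-(2:ℝ))) := by
    rw [Asymptotics.isBigO_iff]
    refine ⟨(b^2)⁻¹, ?_⟩
    have hmem : {x : ℝ | x ≠ 0} ∈ cocompact ℝ :=
      Filter.mem_cocompact.mpr ⟨{0}, isCompact_singleton, fun x hx => hx⟩
    filter_upwards [hmem] with x hx
    have hbx : b * x ≠ 0 := mul_ne_zero hb.ne' hx
    have hrpow : |x| ^ (-(2:ℝ)) = (x^2)⁻¹ := by
      rw [Real.rpow_neg (abs_nonneg x), show ((2:ℝ)) = ((2:ℕ):ℝ) by norm_num,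
        Real.rpow_natCast, _root_.sq_abs x]
    have hnorm : ‖f x‖ = sinc (b*x)^2 := by
      rw [hfdef]
      simp only [Complex.norm_real, Real.norm_eq_abs]
      exact _root_.abs_of_nonneg (sq_nonneg _)
    rw [hnorm, Real.norm_eq_abs, hrpow, _root_.abs_of_nonneg (by positivity)]
    calc sinc (b*x)^2 ≤ ((b*x)^2)⁻¹ := sinc_sq_le _ hbx
      _ = (b^2)⁻¹ * (x^2)⁻¹ := by rw [mul_pow, mul_inv]
  have hsummable : Summable fun n : ℤ => 𝓕 f (n:ℝ) :=
    summable_of_ne_finset_zero (s := {(0:ℤ)}) (fun n hn => hzero n (by simpa using hn))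
  have poisson := Real.tsum_eq_tsum_fourier_of_rpow_decay_of_summable hcont
    one_lt_two hdecay hsummable σ
  have hrhs : ∑' n : ℤ, 𝓕 f (n:ℝ) * fourier n (σ : UnitAddCircle) = ((Real.pi / b : ℝ) : ℂ) := by
    rw [tsum_eq_single (0:ℤ) (fun n hn => by rw [hzero n hn, zero_mul])]
    rw [fourier_zero, mul_one]
    rw [hFf]
    have : tri (Real.pi * ((0:ℤ):ℝ) / b) = 1 := by
      norm_num [tri]
    rw [this, Complex.real_smul, mul_one]
  rw [hrhs] at poisson
  have hlhs : ∑' n : ℤ, f (σ + (n:ℝ)) = ((∑' m : ℤ, sinc (b * (σ + (m:ℝ)))^2 : ℝ) : ℂ) := by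
    rw [Complex.ofReal_tsum]
  rw [hlhs] at poisson
  exact_mod_cast poisson

/-- For `a > 0`, any offset `σ` and any step `0 < h < π/a`, the shifted trapezoidal
sum of `P_Y(y) = (a/π) sinc²(a y)` equals its integral `1`. -/
theorem sinc_sq_shifted_trapezoidal (a : ℝ) (ha : 0 < a) (σ h : ℝ)
    (h0 : 0 < h) (hπ : h < Real.pi / a) :
    h * ∑' m : ℤ, (a / Real.pi) * sinc (a * (((m : ℝ) + σ) * h)) ^ 2 = 1 := by
  have hb : 0 < a * h := mul_pos ha h0
  have hbπ : a * h < Real.pi := by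
    rw [lt_div_iff₀ ha] at hπ
    linarith [hπ]
  have harg : ∀ m : ℤ, a * (((m : ℝ) + σ) * h) = (a*h) * (σ + (m:ℝ)) := by
    intro m; ring
  simp only [harg]
  rw [tsum_mul_left, sinc_sq_sum (a*h) hb hbπ σ]
  field_simp
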